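/- Let L be a λ-theory satisfying β-equality. There is a fully faithful functor F from the category of retracts R of L to the category Pshf L of L-presheaves such that F(U) is isomorphic to the theory presheaf L, where U = λx₁.x₁ is the reflexive object of R; F is the composite of the equivalence R ≃ Karoubi(𝐌M₁) (induced by the monoid isomorphism ρ/λ between η-terms of L₀ and L₁), the embedding of the Karoubi envelope into presheaves on 𝐌M₁ as retracts of representables, and the equivalence of presheaves on 𝐌M₁ with Pshf L. -/

import Mathlib

/-- An (untyped) λ-theory satisfying β-equality (Def. 2.1/2.4 of the paper):
an algebraic theory `T` with abstraction `abs` (written `λₙ` in the paper) and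
application-transpose `rho` (written `ρₙ`), compatible with substitution, and
satisfying β-equality `ρₙ ∘ λₙ = id`. -/
structure LamTh where
  T : ℕ → Type
  xv : ∀ n, Fin n → T n
  subst : ∀ {m n}, T m → (Fin m → T n) → T n
  subst_xv : ∀ {m n} (j : Fin m) (g : Fin m → T n), subst (xv m j) g = g j
  subst_id : ∀ {m} (f : T m), subst f (xv m) = f
  subst_assoc : ∀ {l m n} (f : T l) (g : Fin l → T m) (h : Fin m → T n),
      subst (subst f g) h = subst f fun i => subst (g i) h
  abs : ∀ {n}, T (n + 1) → T n
  rho : ∀ {n}, T n → T (n + 1)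
  abs_subst : ∀ {m n} (f : T (m + 1)) (h : Fin m → T n),
      subst (abs f) h =
        abs (subst f (Fin.snoc (fun i => subst (h i) fun j => xv (n + 1) j.castSucc)
          (xv (n + 1) (Fin.last n))))
  rho_subst : ∀ {m n} (g : T m) (h : Fin m → T n),
      rho (subst g h) =
        subst (rho g) (Fin.snoc (fun i => subst (h i) fun j => xv (n + 1) j.castSucc)
          (xv (n + 1) (Fin.last n)))
  beta : ∀ {n} (f : T (n + 1)), rho (abs f) = f

namespace LamTh

variable (L : LamTh)

/-- Weakening `ι_{n,1} : T n → T (n+1)`. -/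
def wk {n : ℕ} (f : L.T n) : L.T (n + 1) :=
  L.subst f fun j => L.xv (n + 1) j.castSucc

/-- Weakening of a constant `ι_{0,n} : T 0 → T n`. -/
def wk0 {n : ℕ} (a : L.T 0) : L.T n :=
  L.subst a Fin.elim0

/-- Application `f g := ρ(x_{1,1}) • (f, g)` (Def. 2.12/Rem. 2.13). -/
def appT {n : ℕ} (f g : L.T n) : L.T n :=
  L.subst (L.rho (L.xv 1 0)) ![f, g]

/-- Composition of terms, `a ∘ b := λ x. a (b x)`. -/
def compT {n : ℕ} (f g : L.T n) : L.T n :=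
  L.abs (L.appT (L.wk f) (L.appT (L.wk g) (L.xv (n + 1) (Fin.last n))))

/-- `a ∘ b` for constants. -/
def comp (a b : L.T 0) : L.T 0 := L.compT a b

/-- Pairing `(s, t) := λ x. x s t`. -/
def pairT {n : ℕ} (s t : L.T n) : L.T n :=
  L.abs (L.appT (L.appT (L.xv (n + 1) (Fin.last n)) (L.wk s)) (L.wk t))

/-- Pairing of morphisms, `⟨f, g⟩ := λ x. (f x, g x)`. -/
def pairMor (f g : L.T 0) : L.T 0 :=
  L.abs (L.pairT (L.appT (L.wk f) (L.xv 1 0)) (L.appT (L.wk g) (L.xv 1 0)))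

/-- First projection `π₁ = λ x₁. x₁ (λ x₂ x₃. x₂)`. -/
def pi1 : L.T 0 := L.abs (L.appT (L.xv 1 0) (L.abs (L.abs (L.xv 3 1))))

/-- Second projection `π₂ = λ x₁. x₁ (λ x₂ x₃. x₃)`. -/
def pi2 : L.T 0 := L.abs (L.appT (L.xv 1 0) (L.abs (L.abs (L.xv 3 2))))

/-- The reflexive object `U = λ x₁. x₁` of the category of retracts. -/
def UU : L.T 0 := L.abs (L.xv 1 0)

/-- The terminal object `I = λ x₁ x₂. x₂`. -/
def Iterm : L.T 0 := L.abs (L.abs (L.xv 2 1))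

/-- `f` is a morphism `A → B` in the category of retracts `R`:
`B ∘ f = f = f ∘ A`. -/
def IsRMor (A B f : L.T 0) : Prop := L.comp B f = f ∧ L.comp f A = f

/-- `A` is an object of the category of retracts `R`: `A ∘ A = A`. -/
def IsRObj (A : L.T 0) : Prop := L.comp A A = A

/-- `π_{n,i} = π₂ ∘ π₁^{n-i}` (with `i` 0-indexed here, so `π₂ ∘ π₁^{n-1-i}`). -/
def piProj (n : ℕ) (i : Fin n) : L.T 0 :=
  (fun t => L.comp t L.pi1)^[n - 1 - (i : ℕ)] L.pi2

/-- `⟨a₁, …, aₙ⟩ = ⟨⟨…⟨⟨λx.x, a₁⟩, a₂⟩…⟩, aₙ⟩`, the tupling of morphisms. -/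
def tupleMor : ∀ {n : ℕ}, (Fin n → L.T 0) → L.T 0
  | 0, _ => L.UU
  | n + 1, g => L.pairMor (tupleMor fun i => g i.castSucc) (g (Fin.last n))

/-- The `n`-fold product `Uⁿ = ⟨π_{n,i}⟩ᵢ` of `U` in `R`. -/
def Upow (n : ℕ) : L.T 0 := L.tupleMor fun i : Fin n => L.piProj n i

/-- The binary product object `A₁ × A₂ = ⟨A₁ ∘ π₁, A₂ ∘ π₂⟩` in `R`. -/
def prodObj (A₁ A₂ : L.T 0) : L.T 0 :=
  L.pairMor (L.comp A₁ L.pi1) (L.comp A₂ L.pi2)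

/-- The exponential object `C^B = λ x₁. C ∘ x₁ ∘ B` in `R`. -/
def expObj (B C : L.T 0) : L.T 0 :=
  L.abs (L.compT (L.compT (L.wk0 C) (L.xv 1 0)) (L.wk0 B))

end LamTh

open CategoryTheory

/-- A presheaf for the λ-theory `L`: a family of sets with actions
`• : P m × (L n)^m → P n` satisfying the presheaf axioms. -/
structure Pshf (L : LamTh) where
  P : ℕ → Type
  act : ∀ {m n}, P m → (Fin m → L.T n) → P n
  act_id : ∀ {m} (p : P m), act p (L.xv m) = p
  act_assoc : ∀ {l m n} (p : P l) (f : Fin l → L.T m) (g : Fin m → L.T n),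
      act (act p f) g = act p fun i => L.subst (f i) g

/-- A morphism of `L`-presheaves. -/
structure PshfHom {L : LamTh} (P Q : Pshf L) where
  map : ∀ n, P.P n → Q.P n
  comm : ∀ {m n} (p : P.P m) (t : Fin m → L.T n), map n (P.act p t) = Q.act (map m p) t

theorem PshfHom.ext' {L : LamTh} {P Q : Pshf L} {f g : PshfHom P Q}
    (h : f.map = g.map) : f = g := by
  obtain ⟨fm, fc⟩ := f; obtain ⟨gm, gc⟩ := g; cases h; rfl

/-- The category `Pshf L` of `L`-presheaves. -/
instance pshfCategory (L : LamTh) : Category (Pshf L) where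
  Hom := PshfHom
  id P := ⟨fun _ p => p, fun _ _ => rfl⟩
  comp f g := ⟨fun n p => g.map n (f.map n p), fun p t => by
    try dsimp only
    rw [f.comm, g.comm]⟩
  id_comp _ := PshfHom.ext' rfl
  comp_id _ := PshfHom.ext' rfl
  assoc _ _ _ := PshfHom.ext' rfl

/-- The theory presheaf: `L` acting on itself by substitution. -/
def theoryPshf (L : LamTh) : Pshf L where
  P := L.T
  act := L.subst
  act_id := L.subst_id
  act_assoc := L.subst_assoc

/-!
`F` sends an idempotent `A` to the presheaf of terms `t` with `A t = t`, and a morphism `f` to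
application of `f`. By β-equality, applying a closed abstraction `λx₁. s` is substitution into `s`.
A presheaf map `φ` out of `F A` is therefore determined by the image `s ∈ L₁` of the generic
element `A x₁`, and `λx₁. s` is the unique morphism of `R` inducing it; conversely `f = λx₁. B (f x₁)`
for a morphism `f : A → B`, so `f` is recovered from `F f`. Since `U t = t` for every `t`, `F U`
is the whole theory presheaf.
-/

namespace LamTh

variable (L : LamTh)

lemma subst_wk0 {n k : ℕ} (a : L.T 0) (h : Fin n → L.T k) :
    L.subst (L.wk0 a) h = L.wk0 a := by
  rw [wk0, L.subst_assoc, Subsingleton.elim (fun i => L.subst (Fin.elim0 i) h) Fin.elim0]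
  rfl

lemma wk_eq_wk0 (a : L.T 0) : L.wk a = L.wk0 a :=
  congrArg (L.subst a) (Subsingleton.elim _ _)

lemma subst_appT {m n : ℕ} (u v : L.T m) (h : Fin m → L.T n) :
    L.subst (L.appT u v) h = L.appT (L.subst u h) (L.subst v h) := by
  rw [appT, appT, L.subst_assoc]
  congr 1
  funext i
  fin_cases i <;> rfl

lemma subst_xv_zero_single {n : ℕ} (t : L.T n) : L.subst (L.xv 1 0) ![t] = t :=
  L.subst_xv 0 ![t]

lemma subst_single_xv_zero (s : L.T 1) : L.subst s ![L.xv 1 0] = s := by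
  rw [show ![L.xv 1 0] = L.xv 1 from funext fun i => by fin_cases i; rfl, L.subst_id]

lemma rho_eq_appT_wk {n : ℕ} (a : L.T n) :
    L.rho a = L.appT (L.wk a) (L.xv (n + 1) (Fin.last n)) := by
  have h := L.rho_subst (L.xv 1 0) ![a]
  rw [L.subst_xv_zero_single] at h
  rw [h, appT]
  congr 1
  funext i
  fin_cases i <;> rfl

lemma appT_wk_abs {n : ℕ} (f : L.T (n + 1)) :
    L.appT (L.wk (L.abs f)) (L.xv (n + 1) (Fin.last n)) = f := by
  rw [← rho_eq_appT_wk, L.beta]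

lemma appT_wk0_abs {n : ℕ} (s : L.T 1) (t : L.T n) :
    L.appT (L.wk0 (L.abs s)) t = L.subst s ![t] := by
  conv_rhs => rw [← L.appT_wk_abs s]
  rw [subst_appT, wk_eq_wk0, subst_wk0]
  exact congrArg _ (L.subst_xv_zero_single t).symm

lemma comp_eq_abs (a b : L.T 0) :
    L.comp a b = L.abs (L.appT (L.wk0 a) (L.appT (L.wk0 b) (L.xv 1 0))) := by
  rw [comp, compT, wk_eq_wk0, wk_eq_wk0]
  rfl

lemma appT_wk0_comp {n : ℕ} (a b : L.T 0) (t : L.T n) :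
    L.appT (L.wk0 (L.comp a b)) t = L.appT (L.wk0 a) (L.appT (L.wk0 b) t) := by
  rw [comp_eq_abs, appT_wk0_abs, subst_appT, subst_appT, subst_wk0, subst_wk0, subst_xv_zero_single]

lemma appT_wk0_UU {n : ℕ} (t : L.T n) : L.appT (L.wk0 L.UU) t = t := by
  rw [UU, appT_wk0_abs, subst_xv_zero_single]

lemma subst_appT_wk0_var {n : ℕ} (a : L.T 0) (t : L.T n) :
    L.subst (L.appT (L.wk0 a) (L.xv 1 0)) ![t] = L.appT (L.wk0 a) t := by
  rw [subst_appT, subst_wk0, subst_xv_zero_single]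

lemma IsRMor.ext {A B f g : L.T 0} (hf : L.IsRMor A B f) (hg : L.IsRMor A B g)
    (h : L.appT (L.wk0 f) (L.appT (L.wk0 A) (L.xv 1 0)) =
      L.appT (L.wk0 g) (L.appT (L.wk0 A) (L.xv 1 0))) : f = g := by
  rw [← appT_wk0_comp, ← appT_wk0_comp, hf.2, hg.2] at h
  rw [← hf.1, ← hg.1, comp_eq_abs, comp_eq_abs, h]

/-- For idempotent `A` this is the retract of the theory presheaf split by `A`, the image of `A`
under the Yoneda embedding of `Karoubi 𝐌M₁`. -/
def fixedPshf (A : L.T 0) : Pshf L where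
  P n := {t : L.T n // L.appT (L.wk0 A) t = t}
  act p h := ⟨L.subst p.1 h, by rw [← L.subst_wk0 A h, ← subst_appT, p.2]⟩
  act_id p := Subtype.ext (L.subst_id p.1)
  act_assoc p f g := Subtype.ext (L.subst_assoc p.1 f g)

def fixedPshfHom {A B f : L.T 0} (hf : L.comp B f = f) : L.fixedPshf A ⟶ L.fixedPshf B where
  map _ p := ⟨L.appT (L.wk0 f) p.1, by rw [← appT_wk0_comp, hf]⟩
  comm p h := Subtype.ext (by
    change L.appT (L.wk0 f) (L.subst p.1 h) = L.subst (L.appT (L.wk0 f) p.1) h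
    rw [subst_appT, subst_wk0])

lemma fixedPshfHom_id {A : L.T 0} (hA : L.IsRObj A) : L.fixedPshfHom hA = 𝟙 (L.fixedPshf A) :=
  PshfHom.ext' (funext fun _ => funext fun p => Subtype.ext p.2)

lemma fixedPshfHom_comp {A B C f g : L.T 0} (hf : L.comp B f = f) (hg : L.comp C g = g)
    (hgf : L.comp C (L.comp g f) = L.comp g f) :
    L.fixedPshfHom hgf = (L.fixedPshfHom hf : L.fixedPshf A ⟶ _) ≫ L.fixedPshfHom hg :=
  PshfHom.ext' (funext fun _ => funext fun _ => Subtype.ext (L.appT_wk0_comp g f _))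

def fixedPshfGeneric {A : L.T 0} (hA : L.IsRObj A) : (L.fixedPshf A).P 1 :=
  ⟨L.appT (L.wk0 A) (L.xv 1 0), by rw [← appT_wk0_comp, hA]⟩

lemma fixedPshfGeneric_act {A : L.T 0} (hA : L.IsRObj A) {n : ℕ} (p : (L.fixedPshf A).P n) :
    (L.fixedPshf A).act (L.fixedPshfGeneric hA) ![p.1] = p :=
  Subtype.ext ((L.subst_appT_wk0_var A p.1).trans p.2)

lemma map_eq_act_fixedPshfGeneric {A : L.T 0} (hA : L.IsRObj A) {Q : Pshf L}
    (φ : L.fixedPshf A ⟶ Q) {n : ℕ} (p : (L.fixedPshf A).P n) :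
    φ.map n p = Q.act (φ.map 1 (L.fixedPshfGeneric hA)) ![p.1] := by
  rw [← φ.comm, fixedPshfGeneric_act]

lemma fixedPshfHom_injective {A B : L.T 0} (hA : L.IsRObj A) :
    Function.Injective fun f : {f : L.T 0 // L.IsRMor A B f} =>
      (L.fixedPshfHom f.2.1 : L.fixedPshf A ⟶ L.fixedPshf B) :=
  fun f g hfg => Subtype.ext (IsRMor.ext L f.2 g.2
    (congrArg (fun φ : L.fixedPshf A ⟶ L.fixedPshf B => (φ.map 1 (L.fixedPshfGeneric hA)).1) hfg))

lemma fixedPshfHom_surjective {A B : L.T 0} (hA : L.IsRObj A) :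
    Function.Surjective fun f : {f : L.T 0 // L.IsRMor A B f} =>
      (L.fixedPshfHom f.2.1 : L.fixedPshf A ⟶ L.fixedPshf B) := by
  intro φ
  set s : L.T 1 := (φ.map 1 (L.fixedPshfGeneric hA) : (L.fixedPshf B).P 1).1
  have hφ : ∀ n (p : (L.fixedPshf A).P n), (φ.map n p).1 = L.subst s ![p.1] := fun n p =>
    congrArg Subtype.val (map_eq_act_fixedPshfGeneric L hA φ p)
  have hBs : L.appT (L.wk0 B) s = s := (φ.map 1 (L.fixedPshfGeneric hA)).2
  refine ⟨⟨L.abs s, ?_, ?_⟩, PshfHom.ext' (funext fun n => funext fun p => Subtype.ext ?_)⟩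
  · rw [comp_eq_abs, appT_wk0_abs, subst_single_xv_zero, hBs]
  · rw [comp_eq_abs, appT_wk0_abs]
    exact congrArg L.abs (hφ 1 (L.fixedPshfGeneric hA)).symm
  · exact (L.appT_wk0_abs s p.1).trans (hφ n p).symm

def fixedPshfUUIso : L.fixedPshf L.UU ≅ theoryPshf L where
  hom := ⟨fun _ p => p.1, fun _ _ => rfl⟩
  inv := ⟨fun _ t => ⟨t, L.appT_wk0_UU t⟩, fun _ _ => rfl⟩
  hom_inv_id := PshfHom.ext' rfl
  inv_hom_id := PshfHom.ext' rfl

end LamTh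

/-- Let `L` be a λ-theory satisfying β-equality.  There is a
fully faithful functor `F` from the category of retracts `R` of `L` to the
category `Pshf L` of `L`-presheaves such that `F(U)` is isomorphic to the
theory presheaf `L`, where `U = λx₁.x₁` is the reflexive object of `R`.
(`F` arises as the composite of the equivalence `R ≃ Karoubi(𝐌M₁)` induced by
the monoid isomorphism `ρ/λ` between the η-terms of `L₀` and `L₁`, the
embedding of the Karoubi envelope into presheaves on `𝐌M₁` as retracts of
representables, and the equivalence of presheaves on `𝐌M₁` with `Pshf L`.)
Here `R` is described concretely: its objects are the `A ∈ L₀` with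
`A ∘ A = A`, its morphisms `A → B` the `f ∈ L₀` with `B ∘ f = f = f ∘ A`, with
identity `A` on `A` and composition `∘`; a fully faithful functor out of it is
given by an object map together with bijections on hom-sets preserving
identities and composition. -/
theorem R_embeds_in_presheaves (L : LamTh) :
    ∃ (Fobj : {A : L.T 0 // L.IsRObj A} → Pshf L)
      (Fhom : ∀ A B : {A : L.T 0 // L.IsRObj A},
        {f : L.T 0 // L.IsRMor A.1 B.1 f} → (Fobj A ⟶ Fobj B)),
      -- `F` is fully faithful
      (∀ A B, Function.Bijective (Fhom A B)) ∧
      -- `F` preserves identities (recall `id_A = A` in `R`)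
      (∀ A, Fhom A A ⟨A.1, A.2, A.2⟩ = 𝟙 (Fobj A)) ∧
      -- `F` preserves composition
      (∀ (A B C : {A : L.T 0 // L.IsRObj A})
          (f : {f : L.T 0 // L.IsRMor A.1 B.1 f})
          (g : {g : L.T 0 // L.IsRMor B.1 C.1 g})
          (h : {h : L.T 0 // L.IsRMor A.1 C.1 h}),
        h.1 = L.comp g.1 f.1 → Fhom A C h = Fhom A B f ≫ Fhom B C g) ∧
      -- `F(U)` is isomorphic to the theory presheaf
      ∀ hU : L.IsRObj L.UU, Nonempty (Fobj ⟨L.UU, hU⟩ ≅ theoryPshf L) := by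
  refine ⟨fun A => L.fixedPshf A.1, fun A B f => L.fixedPshfHom f.2.1,
    fun A _ => ⟨L.fixedPshfHom_injective A.2, L.fixedPshfHom_surjective A.2⟩,
    fun A => L.fixedPshfHom_id A.2, ?_, fun _ => ⟨L.fixedPshfUUIso⟩⟩
  rintro A B C f g ⟨h, hCh, _⟩ rfl
  exact L.fixedPshfHom_comp f.2.1 g.2.1 hCh
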